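/- For any complex numbers a and b and any real p > 0, there exists a constant C_p > 0 depending only on p such that ||a+b|^{2p}(a+b) - |a|^{2p} a| ≤ C_p (|a|^{2p}|b| + |b|^{2p+1}). -/

import Mathlib

open Real

/-- Mean-value type inequality for rpow on nonnegative reals. -/
lemma rpow_mvt_aux (q : ℝ) (hq : 0 < q) {x y : ℝ} (hx : 0 ≤ x) (hyx : y ≤ x) (hy : 0 ≤ y) :
    x ^ q - y ^ q ≤ max q 1 * (x ^ (q - 1) * (x - y)) := by
  rcases eq_or_lt_of_le hx with rfl | hx0
  · have : y = 0 := le_antisymm hyx hy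
    subst this
    simp
  -- x > 0
  set t : ℝ := y / x with ht
  have ht0 : 0 ≤ t := div_nonneg hy hx0.le
  have ht1 : t ≤ 1 := (div_le_one hx0).2 hyx
  have hyeq : y = x * t := by rw [ht, mul_div_assoc', mul_comm, mul_div_assoc, div_self hx0.ne', mul_one]
  have key : 1 - t ^ q ≤ max q 1 * (1 - t) := by
    rcases le_or_gt 1 q with h1 | h1
    · -- Bernoulli: (1 + (t-1))^q ≥ 1 + q*(t-1)
      have hb := one_add_mul_self_le_rpow_one_add (s := t - 1) (by linarith) (p := q) h1
      have : 1 + q * (t - 1) ≤ t ^ q := by simpa using hb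
      have hm : max q 1 = q := max_eq_left h1
      rw [hm]; nlinarith
    · -- q ≤ 1 : t ≤ t^q
      have hm : max q 1 = 1 := max_eq_right h1.le
      rw [hm, one_mul]
      have : t ≤ t ^ q := by
        rcases eq_or_lt_of_le ht0 with h0 | ht0'
        · rw [← h0]; simp [Real.zero_rpow hq.ne']
        · calc t = t ^ (1 : ℝ) := (Real.rpow_one t).symm
            _ ≤ t ^ q := Real.rpow_le_rpow_of_exponent_ge ht0' ht1 h1.le
      linarith
  have hxq : (0:ℝ) < x ^ q := Real.rpow_pos_of_pos hx0 q
  have hxy : y ^ q = x ^ q * t ^ q := by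
    rw [hyeq, Real.mul_rpow hx0.le ht0]
  have hxx : x ^ (q - 1) * x = x ^ q := by
    rw [← Real.rpow_add_one hx0.ne' (q - 1)]; ring_nf
  calc x ^ q - y ^ q = x ^ q * (1 - t ^ q) := by rw [hxy]; ring
    _ ≤ x ^ q * (max q 1 * (1 - t)) := by
        apply mul_le_mul_of_nonneg_left key hxq.le
    _ = max q 1 * (x ^ (q - 1) * (x - y)) := by
        rw [← hxx, hyeq]; ring

lemma rpow_mvt (q : ℝ) (hq : 0 < q) {x y : ℝ} (hx : 0 ≤ x) (hy : 0 ≤ y) :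
    |x ^ q - y ^ q| ≤ max q 1 * (max x y ^ (q - 1) * |x - y|) := by
  rcases le_total y x with h | h
  · rw [abs_of_nonneg (by have := Real.rpow_le_rpow hy h hq.le; linarith),
      abs_of_nonneg (by linarith), max_eq_left h]
    exact rpow_mvt_aux q hq hx h hy
  · rw [abs_sub_comm, abs_sub_comm x y,
      abs_of_nonneg (by have := Real.rpow_le_rpow hx h hq.le; linarith),
      abs_of_nonneg (by linarith), max_eq_right h]
    exact rpow_mvt_aux q hq hy h hx

lemma two_rpow_bound (q : ℝ) (hq : 0 < q) {A B : ℝ} (hA : 0 ≤ A) (hB : 0 ≤ B) :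
    (A + B) ^ q ≤ 2 ^ q * (A ^ q + B ^ q) := by
  have h1 : A + B ≤ 2 * max A B := by
    rcases le_total A B with h | h
    · rw [max_eq_right h]; linarith
    · rw [max_eq_left h]; linarith
  have h2 : (A + B) ^ q ≤ (2 * max A B) ^ q :=
    Real.rpow_le_rpow (by linarith) h1 hq.le
  have h3 : (2 * max A B) ^ q = 2 ^ q * (max A B) ^ q :=
    Real.mul_rpow (by norm_num) (le_max_of_le_left hA)
  have h4 : (max A B) ^ q ≤ A ^ q + B ^ q := by
    rcases le_total A B with h | h
    · rw [max_eq_right h]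
      have : (0:ℝ) ≤ A ^ q := Real.rpow_nonneg hA q
      linarith
    · rw [max_eq_left h]
      have : (0:ℝ) ≤ B ^ q := Real.rpow_nonneg hB q
      linarith
  calc (A + B) ^ q ≤ 2 ^ q * (max A B) ^ q := by rw [← h3]; exact h2
    _ ≤ 2 ^ q * (A ^ q + B ^ q) := by
        apply mul_le_mul_of_nonneg_left h4 (Real.rpow_nonneg (by norm_num) q)

theorem power_difference_estimate (p : ℝ) (hp : 0 < p) :
    ∃ C : ℝ, 0 < C ∧ ∀ a b : ℂ,
      ‖((‖a + b‖ ^ (2 * p) : ℝ) : ℂ) * (a + b)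
          - ((‖a‖ ^ (2 * p) : ℝ) : ℂ) * a‖
        ≤ C * (‖a‖ ^ (2 * p) * ‖b‖ + ‖b‖ ^ (2 * p + 1)) := by
  set q : ℝ := 2 * p with hqdef
  have hq : 0 < q := by positivity
  refine ⟨(1 + max q 1) * 2 ^ q, by positivity, fun a b => ?_⟩
  set A := ‖a‖ with hA
  set B := ‖b‖ with hB
  set S := ‖a + b‖ with hS
  have hA0 : 0 ≤ A := norm_nonneg a
  have hB0 : 0 ≤ B := norm_nonneg b
  have hS0 : 0 ≤ S := norm_nonneg _
  by_cases hb0 : b = 0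
  · have hSA' : S = A := by rw [hS, hA, hb0, add_zero]
    have hB' : B = 0 := by rw [hB, hb0, norm_zero]
    rw [hSA', hB', hb0, add_zero, sub_self, norm_zero]
    positivity
  have hBpos : 0 < B := norm_pos_iff.mpr hb0
  -- split the difference
  have hsplit : ((S ^ q : ℝ) : ℂ) * (a + b) - ((A ^ q : ℝ) : ℂ) * a
      = ((S ^ q : ℝ) : ℂ) * b + (((S ^ q : ℝ) : ℂ) - ((A ^ q : ℝ) : ℂ)) * a := by
    ring
  rw [hsplit]
  have hterm1 : ‖((S ^ q : ℝ) : ℂ) * b‖ = S ^ q * B := by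
    rw [norm_mul, Complex.norm_real, Real.norm_eq_abs, abs_of_nonneg (Real.rpow_nonneg hS0 q)]
  have hterm2 : ‖(((S ^ q : ℝ) : ℂ) - ((A ^ q : ℝ) : ℂ)) * a‖
      = |S ^ q - A ^ q| * A := by
    rw [norm_mul, ← Complex.ofReal_sub, Complex.norm_real, Real.norm_eq_abs]
  have hSAB : S ≤ A + B := norm_add_le a b
  have hSA : |S - A| ≤ B := by
    have h1 := abs_norm_sub_norm_le (a + b) a
    simpa using h1
  set M : ℝ := max S A with hM
  have hM0 : 0 ≤ M := le_max_of_le_left hS0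
  have hMAB : M ≤ A + B := max_le (by linarith) (by linarith)
  have hAM : A ≤ M := le_max_right S A
  have hAB2 : (A + B) ^ q ≤ 2 ^ q * (A ^ q + B ^ q) := two_rpow_bound q hq hA0 hB0
  have e1 : S ^ q ≤ 2 ^ q * (A ^ q + B ^ q) :=
    le_trans (Real.rpow_le_rpow hS0 hSAB hq.le) hAB2
  have e2 : |S ^ q - A ^ q| ≤ max q 1 * (M ^ (q - 1) * B) := by
    refine le_trans (rpow_mvt q hq hS0 hA0) ?_
    have : M ^ (q - 1) * |S - A| ≤ M ^ (q - 1) * B :=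
      mul_le_mul_of_nonneg_left hSA (Real.rpow_nonneg hM0 _)
    exact mul_le_mul_of_nonneg_left this (le_max_of_le_right zero_le_one)
  have e3 : A * M ^ (q - 1) ≤ 2 ^ q * (A ^ q + B ^ q) := by
    have step : A * M ^ (q - 1) ≤ M ^ q := by
      rcases eq_or_lt_of_le hM0 with h0 | hMpos
      · rw [← h0] at hAM ⊢
        have hA' : A = 0 := le_antisymm hAM hA0
        simp [hA', Real.zero_rpow hq.ne']
      · calc A * M ^ (q - 1) ≤ M * M ^ (q - 1) :=
              mul_le_mul_of_nonneg_right hAM (Real.rpow_nonneg hM0 _)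
          _ = M ^ q := by
              rw [mul_comm, ← Real.rpow_add_one hMpos.ne' (q - 1), sub_add_cancel]
    exact le_trans (step.trans (Real.rpow_le_rpow hM0 hMAB hq.le)) hAB2
  have hBq1 : B ^ (q + 1) = B ^ q * B := by
    rw [Real.rpow_add_one hBpos.ne' q]
  have habs : ‖((S ^ q : ℝ) : ℂ) * b
        + (((S ^ q : ℝ) : ℂ) - ((A ^ q : ℝ) : ℂ)) * a‖
      ≤ S ^ q * B + |S ^ q - A ^ q| * A := by
    refine le_trans (norm_add_le _ _) ?_
    rw [hterm1, hterm2]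
  refine habs.trans ?_
  have hq1 : (0:ℝ) ≤ max q 1 := le_max_of_le_right zero_le_one
  have h2q : (0:ℝ) ≤ 2 ^ q := Real.rpow_nonneg (by norm_num) q
  have hAq : (0:ℝ) ≤ A ^ q := Real.rpow_nonneg hA0 q
  have hBq : (0:ℝ) ≤ B ^ q := Real.rpow_nonneg hB0 q
  have t1 : S ^ q * B ≤ 2 ^ q * (A ^ q + B ^ q) * B :=
    mul_le_mul_of_nonneg_right e1 hB0
  have t2 : |S ^ q - A ^ q| * A ≤ max q 1 * (2 ^ q * (A ^ q + B ^ q)) * B := by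
    calc |S ^ q - A ^ q| * A ≤ max q 1 * (M ^ (q - 1) * B) * A :=
          mul_le_mul_of_nonneg_right e2 hA0
      _ = max q 1 * (A * M ^ (q - 1)) * B := by ring
      _ ≤ max q 1 * (2 ^ q * (A ^ q + B ^ q)) * B := by
          apply mul_le_mul_of_nonneg_right (mul_le_mul_of_nonneg_left e3 hq1) hB0
  rw [hBq1]
  nlinarith [mul_nonneg (mul_nonneg hq1 h2q) (mul_nonneg hBq hB0)]
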